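/- Fix an integer r ≥ 1, d > r, set κ = -1/r, c = d/r, and p_i = (r-i+1)/r for i = 1,…,r (so p_i = 1 + (i-1)κ). Then: (a) p_r + κ = 0, so N_r(z) = 1 for every z ≠ 0, and hence ω_{-1/r}(z) = -l_r·sign(z_r - v_{r-1}(z)) for every z ≠ 0; (b) consequently, with φ_{r-1}(z) := z_r - v_{r-1}(z) and M := (l_r + φ̄)/γ_m, the robustified control u(z) := (1/γ_m)·(ω_{-1/r}(z) + φ̄·sign(ω_{-1/r}(z))) satisfies u(z) = -M·sign(φ_{r-1}(z)) for every z ≠ 0; and (c) if l_1,…,l_r > 0, C > 0 and the Lyapunov function V₋₁/ᵣ(z) = Σ_{j=1}^r W_j(z)^{(c+1)/(c+p_j)} satisfy, at every z with z_i ≠ v_{i-1}(z) for all i, the pure-chain decrease inequality Σ_{i=1}^{r-1} (∂V₋₁/ᵣ/∂z_i)(z)·z_{i+1} + (∂V₋₁/ᵣ/∂z_r)(z)·ω_{-1/r}(z) ≤ -C·V₋₁/ᵣ(z)^{(c+1-1/r)/(c+1)}, then for every such z ≠ 0, every φ ∈ [-φ̄, φ̄] and every γ ∈ [γ_m, γ_M]: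 Σ_{i=1}^{r-1} (∂V₋₁/ᵣ/∂z_i)(z)·z_{i+1} + (∂V₋₁/ᵣ/∂z_r)(z)·(φ + γ·u(z)) ≤ -C·V₋₁/ᵣ(z)^{(c+1-1/r)/(c+1)}. Thus the bounded homogeneous arbitrary-order sliding-mode controller u = -M·sign(φ_{r-1}) of Levant is a particular case (κ = -1/r) of the proposed controller. -/

import Mathlib

/-!
For `κ = -1/r` the exponent `(p_r + κ)/c` of `N_r` vanishes, so `ω = -l_r sign(z_r - v_{r-1})`
is a pure relay and the robustified control is `-M sign(z_r - v_{r-1})`.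

For the decrease inequality, the perturbed vector field differs from the nominal one only in the
last component, by `δ = φ - (γ M - l_r) sign(z_r - v_{r-1})`; since `γ M ≥ l_r + φ̄ ≥ l_r + |φ|`,
`δ` has the sign opposite to `z_r - v_{r-1}`. Among the `W_j` only `W_r` depends on `z_r`, and it
is increasing in `z_r` for `z_r ≥ v_{r-1}` and decreasing for `z_r ≤ v_{r-1}`; hence `∂V/∂z_r` has
the sign of `z_r - v_{r-1}` and the extra term `δ ∂V/∂z_r` is nonpositive.
-/

/-- The `i`-th coordinate (0-based) of `z ∈ ℝ^r`, extended by `0` out of range. -/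
noncomputable def coord (r : ℕ) (z : Fin r → ℝ) (i : ℕ) : ℝ :=
  if h : i < r then z ⟨i, h⟩ else 0

/-- `Ssum r κ c i z = Σ_{j=1}^{i} |z_j|^{c/p_j}` with `p_j = 1 + (j-1)κ` (paper 1-based
indices; `k` below is the 0-based index `j-1`). -/
noncomputable def Ssum (r : ℕ) (κ c : ℝ) (i : ℕ) (z : Fin r → ℝ) : ℝ :=
  ∑ k ∈ Finset.range i, |coord r z k| ^ (c / (1 + (k : ℝ) * κ))

/-- The recursively defined virtual controls: `v_0 = 0` and
`v_i = -l_i N_i sign(z_i - v_{i-1})` with `N_i = (Ssum_i)^{(p_i+κ)/c}`, `p_i = 1 + (i-1)κ`.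
The feedback is `ω_κ = vrec r κ c l r`. -/
noncomputable def vrec (r : ℕ) (κ c : ℝ) (l : ℕ → ℝ) : ℕ → (Fin r → ℝ) → ℝ
  | 0 => fun _ => 0
  | i + 1 => fun z =>
      -(l (i + 1)) * (Ssum r κ c (i + 1) z) ^ ((1 + (i : ℝ) * κ + κ) / c) *
        Real.sign (coord r z i - vrec r κ c l i z)

/-- `⌊x⌉^β = |x|^β sign(x)`. -/
noncomputable def sgnPow (x β : ℝ) : ℝ := |x| ^ β * Real.sign x

/-- `W_i(z) = (Σ_{j=1}^{i-1} |z_j|^{c/p_j})|z_i - v_{i-1}| +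
|⌊z_i⌉^{c/p_i+1} - ⌊v_{i-1}⌉^{c/p_i+1}|/(c/p_i+1)` (paper 1-based index `i`). -/
noncomputable def Wfun (r : ℕ) (κ c : ℝ) (l : ℕ → ℝ) : ℕ → (Fin r → ℝ) → ℝ
  | 0 => fun _ => 0
  | i + 1 => fun z =>
      Ssum r κ c i z * |coord r z i - vrec r κ c l i z| +
        |sgnPow (coord r z i) (c / (1 + (i : ℝ) * κ) + 1) -
            sgnPow (vrec r κ c l i z) (c / (1 + (i : ℝ) * κ) + 1)| /
          (c / (1 + (i : ℝ) * κ) + 1)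

/-- The dilation `ζ_ε^p` with weights `p_i = 1 + (i-1)κ` (0-based: `p_j = 1 + jκ`). -/
noncomputable def dil (r : ℕ) (κ ε : ℝ) (z : Fin r → ℝ) : Fin r → ℝ :=
  fun j => ε ^ (1 + (j : ℕ) * κ) * z j

/-- The Lyapunov function `V_κ(z) = Σ_{j=1}^{r} W_j(z)^{(c+1)/(c+p_j)}`. -/
noncomputable def Vfun (r : ℕ) (κ c : ℝ) (l : ℕ → ℝ) (z : Fin r → ℝ) : ℝ :=
  ∑ j ∈ Finset.range r, (Wfun r κ c l (j + 1) z) ^ ((c + 1) / (c + 1 + (j : ℝ) * κ))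

open Function Set Filter

lemma sgnPow_of_nonneg {x β : ℝ} (hβ : 0 < β) (hx : 0 ≤ x) : sgnPow x β = x ^ β := by
  rcases hx.eq_or_lt with rfl | hx
  · simp [sgnPow, Real.zero_rpow hβ.ne']
  · simp [sgnPow, Real.sign_of_pos hx, abs_of_pos hx]

lemma sgnPow_monotone {β : ℝ} (hβ : 0 < β) : Monotone fun x => sgnPow x β := by
  refine monotone_of_odd_of_monotoneOn_nonneg (fun x => ?_) fun x hx y hy hxy => ?_
  · simp only [sgnPow, abs_neg, Real.sign_neg, mul_neg]
  · simp only [sgnPow_of_nonneg hβ hx, sgnPow_of_nonneg hβ hy]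
    exact Real.rpow_le_rpow hx hxy hβ.le

lemma accPt_principal_Ici (x : ℝ) : AccPt x (𝓟 (Ici x)) := by
  rw [accPt_principal_iff_nhdsWithin, Ici_sdiff_left]
  infer_instance

lemma accPt_principal_Iic (x : ℝ) : AccPt x (𝓟 (Iic x)) := by
  rw [accPt_principal_iff_nhdsWithin, Iic_sdiff_right]
  infer_instance

lemma HasFDerivAt.hasDerivAt_comp_update {ι : Type*} [Fintype ι] [DecidableEq ι]
    {f : (ι → ℝ) → ℝ} {f' : (ι → ℝ) →L[ℝ] ℝ} {z : ι → ℝ} (hf : HasFDerivAt f f' z) (i : ι) :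
    HasDerivAt (fun y => f (update z i y)) (f' (Pi.single i 1)) (z i) := by
  have hf' : HasFDerivAt f f' (update z i (z i)) := by rwa [update_eq_self]
  exact hf'.comp_hasDerivAt (z i) (_root_.hasDerivAt_update z i (z i))

lemma sub_mul_sign_mul_nonpos {φ K x a : ℝ} (hK : |φ| ≤ K) (hpos : 0 ≤ x → 0 ≤ a)
    (hneg : x ≤ 0 → a ≤ 0) : (φ - K * Real.sign x) * a ≤ 0 := by
  have hφ := abs_le.1 hK
  rcases lt_trichotomy x 0 with hx | rfl | hx
  · rw [Real.sign_of_neg hx]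
    exact mul_nonpos_of_nonneg_of_nonpos (by linarith) (hneg hx.le)
  · simp [le_antisymm (hneg le_rfl) (hpos le_rfl)]
  · rw [Real.sign_of_pos hx]
    exact mul_nonpos_of_nonpos_of_nonneg (by linarith) (hpos hx.le)

lemma one_div_mul_add_mul_sign_neg_mul_sign {l : ℝ} (hl : 0 < l) (φ γ x : ℝ) :
    1 / γ * (-l * Real.sign x + φ * Real.sign (-l * Real.sign x)) =
      -((l + φ) / γ) * Real.sign x := by
  rcases lt_trichotomy x 0 with hx | rfl | hx
  · rw [Real.sign_of_neg hx, mul_neg_one, neg_neg, Real.sign_of_pos hl]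
    ring
  · simp
  · rw [Real.sign_of_pos hx, mul_one, Real.sign_of_neg (neg_neg_of_pos hl)]
    ring

section MonotoneProfile

variable {F : ℝ → ℝ} {S k : ℝ}

lemma monotoneOn_mul_abs_sub_add_abs_sub_div (hF : Monotone F) (hS : 0 ≤ S) (hk : 0 ≤ k)
    (v : ℝ) : MonotoneOn (fun y => S * |y - v| + |F y - F v| / k) (Ici v) := by
  intro a ha b hb hab
  have hFa : F v ≤ F a := hF ha
  have hFab : F a ≤ F b := hF hab
  simp only [mem_Ici] at ha hb
  simp only [abs_of_nonneg (sub_nonneg.2 ha), abs_of_nonneg (sub_nonneg.2 hb),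
    abs_of_nonneg (sub_nonneg.2 hFa), abs_of_nonneg (sub_nonneg.2 (hFa.trans hFab))]
  gcongr

lemma antitoneOn_mul_abs_sub_add_abs_sub_div (hF : Monotone F) (hS : 0 ≤ S) (hk : 0 ≤ k)
    (v : ℝ) : AntitoneOn (fun y => S * |y - v| + |F y - F v| / k) (Iic v) := by
  intro a ha b hb hab
  have hFb : F b ≤ F v := hF hb
  have hFab : F a ≤ F b := hF hab
  simp only [mem_Iic] at ha hb
  simp only [abs_of_nonpos (sub_nonpos.2 ha), abs_of_nonpos (sub_nonpos.2 hb),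
    abs_of_nonpos (sub_nonpos.2 hFb), abs_of_nonpos (sub_nonpos.2 (hFab.trans hFb))]
  gcongr

end MonotoneProfile

section LastCoordinate

variable {r n : ℕ} {κ c : ℝ} {l : ℕ → ℝ}

lemma Ssum_congr {i : ℕ} {z z' : Fin r → ℝ} (h : ∀ k < i, coord r z k = coord r z' k) :
    Ssum r κ c i z = Ssum r κ c i z' :=
  Finset.sum_congr rfl fun k hk => by rw [h k (Finset.mem_range.1 hk)]

lemma vrec_congr {z z' : Fin r → ℝ} :
    ∀ i, (∀ k < i, coord r z k = coord r z' k) → vrec r κ c l i z = vrec r κ c l i z'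
  | 0, _ => rfl
  | i + 1, h => by
      simp only [vrec]
      rw [Ssum_congr h, h i i.lt_succ_self,
        vrec_congr i fun k hk => h k (hk.trans i.lt_succ_self)]

lemma Wfun_congr {z z' : Fin r → ℝ} (i : ℕ) (h : ∀ k < i, coord r z k = coord r z' k) :
    Wfun r κ c l i z = Wfun r κ c l i z' := by
  cases i with
  | zero => rfl
  | succ i =>
    have h' : ∀ k < i, coord r z k = coord r z' k := fun k hk => h k (hk.trans i.lt_succ_self)
    simp only [Wfun]
    rw [Ssum_congr h', h i i.lt_succ_self, vrec_congr i h']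

lemma Ssum_nonneg (i : ℕ) (z : Fin r → ℝ) : 0 ≤ Ssum r κ c i z :=
  Finset.sum_nonneg fun _ _ => Real.rpow_nonneg (abs_nonneg _) _

lemma coord_last (z : Fin (n + 1) → ℝ) : coord (n + 1) z n = z (Fin.last n) := by
  simp [coord, Fin.last]

lemma coord_update_last (z : Fin (n + 1) → ℝ) (y : ℝ) :
    coord (n + 1) (update z (Fin.last n) y) n = y := by
  rw [coord_last, update_self]

lemma coord_update_last_of_lt (z : Fin (n + 1) → ℝ) (y : ℝ) {k : ℕ} (hk : k < n) :
    coord (n + 1) (update z (Fin.last n) y) k = coord (n + 1) z k := by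
  have hne : (⟨k, by omega⟩ : Fin (n + 1)) ≠ Fin.last n := by simp [Fin.ext_iff]; omega
  simp [coord, hk.trans n.lt_succ_self, update_of_ne hne]

lemma Wfun_update_last (z : Fin (n + 1) → ℝ) (y : ℝ) :
    Wfun (n + 1) κ c l (n + 1) (update z (Fin.last n) y) =
      Ssum (n + 1) κ c n z * |y - vrec (n + 1) κ c l n z| +
        |sgnPow y (c / (1 + n * κ) + 1) - sgnPow (vrec (n + 1) κ c l n z) (c / (1 + n * κ) + 1)| /
          (c / (1 + n * κ) + 1) := by
  have h : ∀ k < n, coord (n + 1) (update z (Fin.last n) y) k = coord (n + 1) z k :=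
    fun k hk => coord_update_last_of_lt z y hk
  simp only [Wfun]
  rw [Ssum_congr h, vrec_congr n h, coord_update_last]

lemma Vfun_update_last (z : Fin (n + 1) → ℝ) (y : ℝ) :
    Vfun (n + 1) κ c l (update z (Fin.last n) y) =
      ∑ j ∈ Finset.range n, Wfun (n + 1) κ c l (j + 1) z ^ ((c + 1) / (c + 1 + j * κ)) +
        Wfun (n + 1) κ c l (n + 1) (update z (Fin.last n) y) ^ ((c + 1) / (c + 1 + n * κ)) := by
  rw [Vfun, Finset.sum_range_succ]
  congr 1
  refine Finset.sum_congr rfl fun j hj => ?_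
  rw [Wfun_congr (j + 1) fun k hk =>
    coord_update_last_of_lt z _ (by have := Finset.mem_range.1 hj; omega)]

lemma monotoneOn_Vfun_update_last (hp : 0 < 1 + n * κ) (hc : 0 < c) (z : Fin (n + 1) → ℝ) :
    MonotoneOn (fun y => Vfun (n + 1) κ c l (update z (Fin.last n) y))
      (Ici (vrec (n + 1) κ c l n z)) := by
  have hm : 0 < c / (1 + n * κ) + 1 := by positivity
  have hβ : 0 ≤ (c + 1) / (c + 1 + n * κ) := div_nonneg (by linarith) (by linarith)
  intro a ha b hb hab
  simp only [Vfun_update_last, Wfun_update_last]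
  refine add_le_add le_rfl (Real.rpow_le_rpow ?_
    (monotoneOn_mul_abs_sub_add_abs_sub_div (sgnPow_monotone hm) (Ssum_nonneg _ _) hm.le _ ha hb hab) hβ)
  exact add_nonneg (mul_nonneg (Ssum_nonneg _ _) (abs_nonneg _)) (by positivity)

lemma antitoneOn_Vfun_update_last (hp : 0 < 1 + n * κ) (hc : 0 < c) (z : Fin (n + 1) → ℝ) :
    AntitoneOn (fun y => Vfun (n + 1) κ c l (update z (Fin.last n) y))
      (Iic (vrec (n + 1) κ c l n z)) := by
  have hm : 0 < c / (1 + n * κ) + 1 := by positivity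
  have hβ : 0 ≤ (c + 1) / (c + 1 + n * κ) := div_nonneg (by linarith) (by linarith)
  intro a ha b hb hab
  simp only [Vfun_update_last, Wfun_update_last]
  refine add_le_add le_rfl (Real.rpow_le_rpow ?_
    (antitoneOn_mul_abs_sub_add_abs_sub_div (sgnPow_monotone hm) (Ssum_nonneg _ _) hm.le _ ha hb hab) hβ)
  exact add_nonneg (mul_nonneg (Ssum_nonneg _ _) (abs_nonneg _)) (by positivity)

lemma fderiv_Vfun_single_last_nonneg (hp : 0 < 1 + n * κ) (hc : 0 < c) {z : Fin (n + 1) → ℝ}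
    (hz : vrec (n + 1) κ c l n z ≤ z (Fin.last n)) :
    0 ≤ fderiv ℝ (Vfun (n + 1) κ c l) z (Pi.single (Fin.last n) 1) := by
  by_cases hV : DifferentiableAt ℝ (Vfun (n + 1) κ c l) z
  · exact (hV.hasFDerivAt.hasDerivAt_comp_update _).hasDerivWithinAt.nonneg_of_monotoneOn
      (accPt_principal_Ici _) ((monotoneOn_Vfun_update_last hp hc z).mono (Ici_subset_Ici.2 hz))
  · simp [fderiv_zero_of_not_differentiableAt hV]

lemma fderiv_Vfun_single_last_nonpos (hp : 0 < 1 + n * κ) (hc : 0 < c) {z : Fin (n + 1) → ℝ}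
    (hz : z (Fin.last n) ≤ vrec (n + 1) κ c l n z) :
    fderiv ℝ (Vfun (n + 1) κ c l) z (Pi.single (Fin.last n) 1) ≤ 0 := by
  by_cases hV : DifferentiableAt ℝ (Vfun (n + 1) κ c l) z
  · exact (hV.hasFDerivAt.hasDerivAt_comp_update _).hasDerivWithinAt.nonpos_of_antitoneOn
      (accPt_principal_Iic _) ((antitoneOn_Vfun_update_last hp hc z).mono (Iic_subset_Iic.2 hz))
  · simp [fderiv_zero_of_not_differentiableAt hV]

end LastCoordinate

section LevantCase

variable {n : ℕ} {κ c : ℝ} {l : ℕ → ℝ}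

lemma vrec_last_eq_neg_mul_sign (hκ : 1 + n * κ + κ = 0) (z : Fin (n + 1) → ℝ) :
    vrec (n + 1) κ c l (n + 1) z =
      -l (n + 1) * Real.sign (coord (n + 1) z n - vrec (n + 1) κ c l n z) := by
  simp [vrec, hκ]

def chainField (z : Fin (n + 1) → ℝ) (a : ℝ) : Fin (n + 1) → ℝ :=
  fun j => if h : (j : ℕ) + 1 < n + 1 then z ⟨(j : ℕ) + 1, h⟩ else a

lemma chainField_eq_add_smul_single (z : Fin (n + 1) → ℝ) (a b : ℝ) :
    chainField z a = chainField z b + (a - b) • Pi.single (Fin.last n) 1 := by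
  funext j
  by_cases hj : (j : ℕ) + 1 < n + 1
  · have hne : j ≠ Fin.last n := by simp [Fin.ext_iff]; omega
    simp [chainField, hj, hne]
  · obtain rfl : j = Fin.last n := by ext; simp; omega
    simp [chainField]

end LevantCase

theorem stmt17_general (r : ℕ) (hr : 1 ≤ r) (d : ℝ) (hd : (r : ℝ) < d)
    (κ c : ℝ) (hκ : κ = -(1 / (r : ℝ))) (hcc : c = d / (r : ℝ))
    (l : ℕ → ℝ) (hl : ∀ i, 1 ≤ i → i ≤ r → 0 < l i)
    (φbar γm γM C : ℝ) (hγm : 0 < γm) :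
    (∀ z : Fin r → ℝ, z ≠ 0 →
        (Ssum r κ c r z) ^ ((1 + ((r - 1 : ℕ) : ℝ) * κ + κ) / c) = 1 ∧
        vrec r κ c l r z =
          -(l r) * Real.sign (coord r z (r - 1) - vrec r κ c l (r - 1) z)) ∧
    (∀ z : Fin r → ℝ, z ≠ 0 →
        (1 / γm) * (vrec r κ c l r z + φbar * Real.sign (vrec r κ c l r z)) =
          -((l r + φbar) / γm) *
            Real.sign (coord r z (r - 1) - vrec r κ c l (r - 1) z)) ∧
    ((∀ z : Fin r → ℝ, (∀ i, i < r → coord r z i ≠ vrec r κ c l i z) →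
        fderiv ℝ (Vfun r κ c l) z
            (fun j : Fin r =>
              if h : (j : ℕ) + 1 < r then z ⟨(j : ℕ) + 1, h⟩ else vrec r κ c l r z) ≤
          -C * (Vfun r κ c l z) ^ ((c + 1 + κ) / (c + 1))) →
      ∀ z : Fin r → ℝ, z ≠ 0 → (∀ i, i < r → coord r z i ≠ vrec r κ c l i z) →
        ∀ φ γ : ℝ, |φ| ≤ φbar → γm ≤ γ → γ ≤ γM →
          fderiv ℝ (Vfun r κ c l) z
              (fun j : Fin r =>
                if h : (j : ℕ) + 1 < r then z ⟨(j : ℕ) + 1, h⟩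
                else φ + γ * ((1 / γm) *
                  (vrec r κ c l r z + φbar * Real.sign (vrec r κ c l r z)))) ≤
            -C * (Vfun r κ c l z) ^ ((c + 1 + κ) / (c + 1))) := by
  obtain ⟨n, rfl⟩ := Nat.exists_eq_add_of_le' hr
  simp only [Nat.add_sub_cancel]
  push_cast at hκ hd hcc
  have hn : (0 : ℝ) < n + 1 := by positivity
  have hκ₀ : 1 + n * κ + κ = 0 := by rw [hκ]; field_simp; ring
  have hp : 0 < 1 + n * κ := by
    have : 1 + n * κ = 1 / (n + 1) := by rw [hκ]; field_simp; ring
    rw [this]; positivity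
  have hc : 0 < c := hcc ▸ div_pos (by linarith) hn
  have hl₀ : 0 < l (n + 1) := hl _ le_add_self le_rfl
  have hω := vrec_last_eq_neg_mul_sign (c := c) (l := l) hκ₀
  have hu : ∀ z, 1 / γm * (vrec (n + 1) κ c l (n + 1) z +
      φbar * Real.sign (vrec (n + 1) κ c l (n + 1) z)) =
      -((l (n + 1) + φbar) / γm) * Real.sign (coord (n + 1) z n - vrec (n + 1) κ c l n z) :=
    fun z => by rw [hω]; exact one_div_mul_add_mul_sign_neg_mul_sign hl₀ _ _ _
  refine ⟨fun z _ => ⟨by rw [hκ₀, zero_div, Real.rpow_zero], hω z⟩, fun z _ => hu z, ?_⟩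
  intro hchain z _ hcond φ γ hφ hγ _
  set M := (l (n + 1) + φbar) / γm
  have hK : |φ| ≤ γ * M - l (n + 1) := by
    have hM : 0 ≤ M := div_nonneg (by linarith [abs_nonneg φ]) hγm.le
    have hγmM : γm * M = l (n + 1) + φbar := mul_div_cancel₀ _ hγm.ne'
    nlinarith [mul_le_mul_of_nonneg_right hγ hM]
  have hδ : φ + γ * (1 / γm * (vrec (n + 1) κ c l (n + 1) z +
      φbar * Real.sign (vrec (n + 1) κ c l (n + 1) z))) - vrec (n + 1) κ c l (n + 1) z =
      φ - (γ * M - l (n + 1)) * Real.sign (z (Fin.last n) - vrec (n + 1) κ c l n z) := by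
    rw [hu, hω, coord_last]
    ring
  change fderiv ℝ _ z (chainField z _) ≤ _
  rw [chainField_eq_add_smul_single z _ (vrec (n + 1) κ c l (n + 1) z), map_add, map_smul,
    smul_eq_mul, hδ]
  exact add_le_of_le_of_nonpos (hchain z hcond) (sub_mul_sign_mul_nonpos hK
    (fun hx => fderiv_Vfun_single_last_nonneg hp hc (sub_nonneg.1 hx))
    (fun hx => fderiv_Vfun_single_last_nonpos hp hc (sub_nonpos.1 hx)))

/-- Levant's homogeneous arbitrary-order sliding-mode controller as the particular case
`κ = -1/r`, `c = d/r` (`d > r`) of the proposed controller: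
(a) `p_r + κ = 0`, so `N_r(z) = 1` and `ω_{-1/r}(z) = -l_r sign(z_r - v_{r-1}(z))` for `z ≠ 0`;
(b) the robustified control `u = (ω_{-1/r} + φ̄ sign(ω_{-1/r}))/γ_m` equals
`-M sign(φ_{r-1})` with `M = (l_r + φ̄)/γ_m` and `φ_{r-1} = z_r - v_{r-1}`;
(c) if `V_{-1/r}` satisfies the pure-chain decrease inequality, then it satisfies the same
inequality along the perturbed chain closed by `u`, for all `φ ∈ [-φ̄, φ̄]`,
`γ ∈ [γ_m, γ_M]`. -/
theorem stmt17 (r : ℕ) (hr : 1 ≤ r) (d : ℝ) (hd : (r : ℝ) < d)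
    (κ c : ℝ) (hκ : κ = -(1 / (r : ℝ))) (hcc : c = d / (r : ℝ))
    (l : ℕ → ℝ) (hl : ∀ i, 1 ≤ i → i ≤ r → 0 < l i)
    (φbar γm γM C : ℝ) (hφ : 0 ≤ φbar) (hγm : 0 < γm) (hγ : γm ≤ γM) (hC : 0 < C) :
    (∀ z : Fin r → ℝ, z ≠ 0 →
        (Ssum r κ c r z) ^ ((1 + ((r - 1 : ℕ) : ℝ) * κ + κ) / c) = 1 ∧
        vrec r κ c l r z =
          -(l r) * Real.sign (coord r z (r - 1) - vrec r κ c l (r - 1) z)) ∧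
    (∀ z : Fin r → ℝ, z ≠ 0 →
        (1 / γm) * (vrec r κ c l r z + φbar * Real.sign (vrec r κ c l r z)) =
          -((l r + φbar) / γm) *
            Real.sign (coord r z (r - 1) - vrec r κ c l (r - 1) z)) ∧
    ((∀ z : Fin r → ℝ, (∀ i, i < r → coord r z i ≠ vrec r κ c l i z) →
        fderiv ℝ (Vfun r κ c l) z
            (fun j : Fin r =>
              if h : (j : ℕ) + 1 < r then z ⟨(j : ℕ) + 1, h⟩ else vrec r κ c l r z) ≤
          -C * (Vfun r κ c l z) ^ ((c + 1 + κ) / (c + 1))) →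
      ∀ z : Fin r → ℝ, z ≠ 0 → (∀ i, i < r → coord r z i ≠ vrec r κ c l i z) →
        ∀ φ γ : ℝ, |φ| ≤ φbar → γm ≤ γ → γ ≤ γM →
          fderiv ℝ (Vfun r κ c l) z
              (fun j : Fin r =>
                if h : (j : ℕ) + 1 < r then z ⟨(j : ℕ) + 1, h⟩
                else φ + γ * ((1 / γm) *
                  (vrec r κ c l r z + φbar * Real.sign (vrec r κ c l r z)))) ≤
            -C * (Vfun r κ c l z) ^ ((c + 1 + κ) / (c + 1))) :=
  stmt17_general r hr d hd κ c hκ hcc l hl φbar γm γM C hγm
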